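/- arXiv:2307.07259 — 4 statements merged into one kernel-verified Lean document; each statement's English description precedes it below -/
import Mathlib

section
/- Consider small categories A, B, C, D and functors F: A → B, I: A → C, J: B → D, G: C → D with J ∘ F = G ∘ I. Suppose that for every object b of B the induced functor between comma categories b↓F → Jb↓G, sending (a ∈ A, f: b → F a) to (I a, J f: J b → G I a), is initial (equivalently, its opposite functor is final). Then the Beck–Chevalley natural transformation F_! ∘ I^* ⟹ J^* ∘ G_! between functors Fun(C^op, Set) → Fun(B^op, Set) is a natural isomorphism. -/
/-!
The hypothesis says that the square `F ⋙ J = I ⋙ G` is exact in the sense of Guitart. The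
opposite square is then exact as well, and for an exact square the base change map of left Kan
extensions is an isomorphism: pointwise Kan extensions are colimits over comma categories, and
the comparison functors between these comma categories are final. The Beck–Chevalley
transformation is this base change map, because both are transposed under `F_! ⊣ F^*` to the
unit of `G_! ⊣ G^*` whiskered by the square.
-/

open CategoryTheory

universe u

namespace Paper

variable {A B C D : Type u} [SmallCategory A] [SmallCategory B] [SmallCategory C]
  [SmallCategory D]

/-- Given a commutative square `J ∘ F = G ∘ I` of functors and an object `b` of `B`, the
induced functor between comma categories `b ↓ F ⥤ J b ↓ G`, sending
`(a, f : b ⟶ F a)` to `(I a, J f : J b ⟶ G (I a))`. -/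
def inducedComma (F : A ⥤ B) (I : A ⥤ C) (J : B ⥤ D) (G : C ⥤ D)
    (h : F ⋙ J = I ⋙ G) (b : B) :
    StructuredArrow b F ⥤ StructuredArrow (J.obj b) G where
  obj p := StructuredArrow.mk (Y := I.obj p.right)
    (J.map p.hom ≫ eqToHom (by rw [← Functor.comp_obj, h, Functor.comp_obj]))
  map {p q} f := StructuredArrow.homMk (I.map f.right) (by
    have hw : p.hom ≫ F.map f.right = q.hom := StructuredArrow.w f
    have hc := Functor.congr_hom h f.right
    simp only [Functor.comp_map] at hc
    dsimp
    rw [← hw, Functor.map_comp, Category.assoc, hc]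
    simp)

/-- The equality of restriction functors between presheaf categories induced by a
commutative square `J ∘ F = G ∘ I`, namely `I^* ∘ G^* = F^* ∘ J^*`. -/
lemma restrictionSquare (F : A ⥤ B) (I : A ⥤ C) (J : B ⥤ D) (G : C ⥤ D)
    (h : F ⋙ J = I ⋙ G) :
    ((Functor.whiskeringLeft Cᵒᵖ Dᵒᵖ (Type u)).obj G.op) ⋙
        ((Functor.whiskeringLeft Aᵒᵖ Cᵒᵖ (Type u)).obj I.op) =
      ((Functor.whiskeringLeft Bᵒᵖ Dᵒᵖ (Type u)).obj J.op) ⋙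
        ((Functor.whiskeringLeft Aᵒᵖ Bᵒᵖ (Type u)).obj F.op) := by
  have h' : I.op ⋙ G.op = F.op ⋙ J.op := (congrArg Functor.op h).symm
  show (Functor.whiskeringLeft Aᵒᵖ Dᵒᵖ (Type u)).obj (I.op ⋙ G.op) =
    (Functor.whiskeringLeft Aᵒᵖ Dᵒᵖ (Type u)).obj (F.op ⋙ J.op)
  rw [h']

end Paper

namespace CategoryTheory.TwoSquare

variable {C₁ C₂ C₃ C₄ : Type*} [Category C₁] [Category C₂] [Category C₃] [Category C₄]
  {T : C₁ ⥤ C₂} {L : C₁ ⥤ C₃} {R : C₂ ⥤ C₄} {B : C₃ ⥤ C₄}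

def whiskeringLeft (w : TwoSquare T L R B) (D : Type*) [Category D] :
    TwoSquare ((Functor.whiskeringLeft C₂ C₄ D).obj R) ((Functor.whiskeringLeft C₃ C₄ D).obj B)
      ((Functor.whiskeringLeft C₁ C₂ D).obj T) ((Functor.whiskeringLeft C₁ C₃ D).obj L) :=
  (Functor.whiskeringLeft C₁ C₄ D).map w.natTrans

lemma lanBaseChange_eq_mateEquiv_symm (w : TwoSquare T L R B) (D : Type*) [Category D]
    [∀ F : C₁ ⥤ D, L.HasLeftKanExtension F] [∀ F : C₂ ⥤ D, R.HasLeftKanExtension F] :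
    w.lanBaseChange =
      (mateEquiv (R.lanAdjunction D) (L.lanAdjunction D)).symm (w.whiskeringLeft D) := by
  ext K : 2
  refine ((L.lanAdjunction D).homEquiv _ _).symm_apply_eq.2 ?_
  have hunit := unit_mateEquiv_symm (R.lanAdjunction D) (L.lanAdjunction D) (w.whiskeringLeft D) K
  dsimp only [Functor.id_obj] at hunit
  rw [Adjunction.homEquiv_unit, ← hunit]
  ext X
  simp only [Functor.comp_obj, Functor.whiskeringLeft_obj_obj, Functor.LeftExtension.mk_hom,
    NatTrans.comp_app, Functor.associator_inv_app, Functor.whiskerRight_app,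
    Functor.associator_hom_app, Category.comp_id, Category.id_comp, Functor.lanAdjunction_unit,
    whiskeringLeft, Functor.whiskeringLeft_map_app_app]
  rfl

end CategoryTheory.TwoSquare

namespace Paper

variable {A B C D : Type u} [SmallCategory A] [SmallCategory B] [SmallCategory C]
  [SmallCategory D]

def inducedCommaIso (F : A ⥤ B) (I : A ⥤ C) (J : B ⥤ D) (G : C ⥤ D)
    (h : F ⋙ J = I ⋙ G) (b : B) :
    inducedComma F I J G h b ≅ (TwoSquare.mk F I J G (eqToHom h)).structuredArrowDownwards b :=
  NatIso.ofComponents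
    (fun _ ↦ StructuredArrow.isoMk (Iso.refl _)
      (by simp [inducedComma, TwoSquare.structuredArrowDownwards, StructuredArrow.post,
        eqToHom_app]))
    (fun _ ↦ by
      ext
      simp [inducedComma, TwoSquare.structuredArrowDownwards, StructuredArrow.post])

lemma guitartExact_iff_inducedComma_initial (F : A ⥤ B) (I : A ⥤ C) (J : B ⥤ D) (G : C ⥤ D)
    (h : F ⋙ J = I ⋙ G) :
    (TwoSquare.mk F I J G (eqToHom h)).GuitartExact ↔ ∀ b, (inducedComma F I J G h b).Initial := by
  simp only [TwoSquare.guitartExact_iff_initial,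
    fun b ↦ Functor.initial_natIso_iff (inducedCommaIso F I J G h b)]

lemma eqToHom_restrictionSquare (F : A ⥤ B) (I : A ⥤ C) (J : B ⥤ D) (G : C ⥤ D)
    (h : F ⋙ J = I ⋙ G) :
    eqToHom (restrictionSquare F I J G h) =
      (TwoSquare.mk F I J G (eqToHom h)).op.whiskeringLeft (Type u) := by
  ext K : 2
  refine NatTrans.ext (funext fun X ↦ ?_)
  simp [TwoSquare.whiskeringLeft, eqToHom_app, eqToHom_map]

/-- **Beck–Chevalley.** Consider small categories `A, B, C, D` and functors
`F : A ⥤ B`, `I : A ⥤ C`, `J : B ⥤ D`, `G : C ⥤ D` with `J ∘ F = G ∘ I`. Suppose that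
for every object `b` of `B` the induced functor between comma categories
`b ↓ F ⥤ J b ↓ G` is initial. Then the Beck–Chevalley natural transformation
`F_! ∘ I^* ⟹ J^* ∘ G_!` between functors `Fun(Cᵒᵖ, Set) ⥤ Fun(Bᵒᵖ, Set)` — i.e. the mate
of the equality `I^* ∘ G^* = F^* ∘ J^*` with respect to the Kan extension adjunctions
`G_! ⊣ G^*` and `F_! ⊣ F^*` — is a natural isomorphism. -/
theorem statement_0 (F : A ⥤ B) (I : A ⥤ C) (J : B ⥤ D) (G : C ⥤ D)
    (h : F ⋙ J = I ⋙ G)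
    (hinit : ∀ b : B, (inducedComma F I J G h b).Initial) :
    IsIso ((mateEquiv (G.op.lanAdjunction (Type u)) (F.op.lanAdjunction (Type u))).symm
      (eqToHom (restrictionSquare F I J G h))) := by
  have := (guitartExact_iff_inducedComma_initial F I J G h).2 hinit
  rw [eqToHom_restrictionSquare F I J G h, ← TwoSquare.lanBaseChange_eq_mateEquiv_symm]
  infer_instance

end Paper
end

section
/- The simplicial set C(μ,u) has exactly m+2 vertices: the canonical map ∐_{0≤i≤m+1} Δ[0] → C(μ,u) from the defining pushout induces a bijection from the set {0, 1, …, m+1} onto the set of 0-simplices of C(μ,u). (This is the levelwise form of the paper's computation of the 0-th level of the cone Cone_{μ,f}.) -/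
open CategoryTheory Simplicial Opposite Limits

set_option synthInstance.maxHeartbeats 1000000
set_option maxHeartbeats 1000000

namespace Paper

/-!
Sending the copies of `Δ[m]` into `Δ[m+1]` by the last face, the copies of `Δ[l+1]` by
`μ + 1` (`muPlus`) and the point `i` to the vertex `i` defines a map `C(μ,u) ⟶ Δ[m+1]` taking
the vertex `i` to `i`; hence the vertices `0, …, m+1` are distinct. Conversely, every vertex of
the amalgam already lies in the middle term `∐ Δ[0]` of the span: a vertex `k ≤ l` of a copy of
`Δ[l+1]` is glued to the vertex `μ k` of a copy of `Δ[m]`, and the vertex `l+1` is picked by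
the `a`-summands. So every vertex of the pushout `C(μ,u)` comes from `∐_{0 ≤ i ≤ m+1} Δ[0]`.
-/

/-- The vertex `k` of `Δ[q]`, as a map `Δ[0] ⟶ Δ[q]`. -/
def stdVert (q : ℕ) (k : Fin (q + 1)) : (Δ[0] : SSet) ⟶ (Δ[q] : SSet) :=
  SSet.stdSimplex.map (SimplexCategory.const _ _ k)

/-- The vertex `k` of the standard simplex `Δ[q]`, as a `0`-simplex. -/
def vertStd (q : ℕ) (k : Fin (q + 1)) : (Δ[q] : SSet).obj (op (SimplexCategory.mk 0)) :=
  SSet.stdSimplex.objEquiv.symm (SimplexCategory.const _ _ k)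

universe u

lemma vertStd_injective (q : ℕ) : Function.Injective (vertStd q) :=
  SSet.stdSimplex.obj₀Equiv.symm.injective

lemma vertStd_surjective (q : ℕ) : Function.Surjective (vertStd q) :=
  SSet.stdSimplex.obj₀Equiv.symm.surjective

lemma stdVert_comp {q r : ℕ} (φ : ⦋q⦌ ⟶ ⦋r⦌) (k : Fin (q + 1)) :
    stdVert q k ≫ SSet.stdSimplex.map φ = stdVert r (φ.toOrderHom k) := by
  rw [stdVert, stdVert, ← SimplexCategory.const_comp]
  exact (SSet.stdSimplex.map_comp _ _).symm

lemma SSet.sigma_ι_app_jointly_surjective {I : Type u} (F : I → SSet.{u})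
    {X : SimplexCategoryᵒᵖ} (x : (∐ F).obj X) : ∃ i y, (Sigma.ι F i).app X y = x :=
  Cofan.inj_jointly_surjective_of_isColimit
    (isColimitCofanMkObjOfIsColimit ((evaluation _ _).obj X) _ _ (coproductIsCoproduct _)) x

lemma SSet.pushout_app_jointly_surjective {F G H : SSet.{u}} (f : F ⟶ G) (g : F ⟶ H)
    {X : SimplexCategoryᵒᵖ} (x : (pushout f g).obj X) :
    (∃ y, (pushout.inl f g).app X y = x) ∨ ∃ z, (pushout.inr f g).app X z = x :=
  Types.eq_or_eq_of_isPushout ((IsPushout.of_hasPushout f g).map ((evaluation _ _).obj X)) x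

lemma SSet.pushout_inr_app_surjective {F G H : SSet.{u}} {f : F ⟶ G} (g : F ⟶ H)
    {X : SimplexCategoryᵒᵖ} (hf : Function.Surjective (f.app X)) :
    Function.Surjective ((pushout.inr f g).app X) := by
  intro x
  rcases SSet.pushout_app_jointly_surjective f g x with ⟨y, rfl⟩ | hx
  · obtain ⟨w, rfl⟩ := hf y
    refine ⟨g.app X w, ?_⟩
    rw [← NatTrans.comp_app_apply, ← pushout.condition, NatTrans.comp_app_apply]
  · exact hx

lemma δ_last_apply {n : ℕ} (v : Fin (n + 1)) :
    (SimplexCategory.δ (Fin.last (n + 1))).toOrderHom v = v.castSucc := by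
  simp [SimplexCategory.δ, Fin.succAbove_last]

section Cone

variable (A B : Type) (u : A → B) (l m : ℕ)
  (μ : SimplexCategory.mk l ⟶ SimplexCategory.mk m)

/-- The map `∐_{a ∈ A} Δ[l] ⟶ ∐_{b ∈ B} Δ[m]` sending the copy of `Δ[l]` indexed by `a`
into the copy of `Δ[m]` indexed by `u a` via `μ`. -/
noncomputable def toLB : (∐ fun _ : A => (Δ[l] : SSet)) ⟶ (∐ fun _ : B => (Δ[m] : SSet)) :=
  Sigma.desc fun a => SSet.stdSimplex.map μ ≫ Sigma.ι (fun _ : B => (Δ[m] : SSet)) (u a)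

/-- The map `∐_{a ∈ A} Δ[l] ⟶ ∐_{a ∈ A} Δ[l+1]` given on each summand by the face
`d^{l+1}`. -/
noncomputable def toLA1 : (∐ fun _ : A => (Δ[l] : SSet)) ⟶ (∐ fun _ : A => (Δ[l+1] : SSet)) :=
  Sigma.desc fun a =>
    SSet.stdSimplex.map (SimplexCategory.δ (Fin.last (l + 1))) ≫
      Sigma.ι (fun _ : A => (Δ[l+1] : SSet)) a

/-- The amalgam `(∐_{b ∈ B} Δ[m]) ⊔_{∐_{a ∈ A} Δ[l]} (∐_{a ∈ A} Δ[l+1])`. -/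
noncomputable def LL : SSet := pushout (toLB A B u l m μ) (toLA1 A l)

/-- The left leg of the defining span of `C(μ,u)`: it picks, in the `(i,b)`-summand, the
vertex `i` of the copy of `Δ[m]` indexed by `b`, and in the `a`-summand the vertex `l+1`
of the copy of `Δ[l+1]` indexed by `a`. -/
noncomputable def midToL :
    (∐ fun _ : ((Fin (m + 1) × B) ⊕ A) => (Δ[0] : SSet)) ⟶ LL A B u l m μ :=
  Sigma.desc fun (x : (Fin (m + 1) × B) ⊕ A) =>
    match x with
    | Sum.inl (i, b) => stdVert m i ≫ Sigma.ι (fun _ : B => (Δ[m] : SSet)) b ≫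
        pushout.inl (toLB A B u l m μ) (toLA1 A l)
    | Sum.inr a => stdVert (l + 1) (Fin.last (l + 1)) ≫
        Sigma.ι (fun _ : A => (Δ[l+1] : SSet)) a ≫
        pushout.inr (toLB A B u l m μ) (toLA1 A l)

/-- The right leg of the defining span of `C(μ,u)`: it sends the `(i,b)`-summands to the
point indexed by `i` and the `a`-summands to the point indexed by `m+1`. -/
noncomputable def midToR :
    (∐ fun _ : ((Fin (m + 1) × B) ⊕ A) => (Δ[0] : SSet)) ⟶
      (∐ fun _ : Fin (m + 2) => (Δ[0] : SSet)) :=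
  Sigma.desc fun (x : (Fin (m + 1) × B) ⊕ A) =>
    match x with
    | Sum.inl (i, _) => Sigma.ι (fun _ : Fin (m + 2) => (Δ[0] : SSet)) i.castSucc
    | Sum.inr _ => Sigma.ι (fun _ : Fin (m + 2) => (Δ[0] : SSet)) (Fin.last (m + 1))

/-- The simplicial set `C(μ,u)`, defined as the pushout of the span with legs `midToL`
and `midToR`. -/
noncomputable def CC : SSet := pushout (midToL A B u l m μ) (midToR A B m)

/-- The vertices `0, 1, …, m+1` of `C(μ,u)`, i.e. the images of the points of
`∐_{0 ≤ i ≤ m+1} Δ[0]` under the canonical map to the pushout. -/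
noncomputable def vertC (i : Fin (m + 2)) :
    (CC A B u l m μ).obj (op (SimplexCategory.mk 0)) :=
  (Sigma.ι (fun _ : Fin (m + 2) => (Δ[0] : SSet)) i ≫
      pushout.inr (midToL A B u l m μ) (midToR A B m)).app
    (op (SimplexCategory.mk 0)) (vertStd 0 0)

/-- The map `μ + 1 : [l+1] ⟶ [m+1]` extending `μ` by sending `l+1` to `m+1`. -/
def muPlus : SimplexCategory.mk (l + 1) ⟶ SimplexCategory.mk (m + 1) :=
  SimplexCategory.Hom.mk
    { toFun := fun i =>
        if h : (i : ℕ) < l + 1 then (μ.toOrderHom ⟨(i : ℕ), h⟩).castSucc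
        else Fin.last (m + 1)
      monotone' := by
        intro i j hij
        by_cases hi : (i : ℕ) < l + 1 <;> by_cases hj : (j : ℕ) < l + 1
        · simp only [hi, hj, dif_pos]
          exact Fin.castSucc_le_castSucc_iff.mpr (μ.toOrderHom.monotone hij)
        · simp only [hi, hj, dif_pos, dif_neg, not_false_iff]
          exact Fin.le_last _
        · exfalso
          have h' : (i : ℕ) ≤ (j : ℕ) := hij
          omega
        · simp only [hi, hj, dif_neg, not_false_iff]
          exact le_refl _ }

lemma muPlus_castSucc (v : Fin (l + 1)) :
    (muPlus l m μ).toOrderHom v.castSucc = (μ.toOrderHom v).castSucc :=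
  dif_pos v.isLt

lemma muPlus_last : (muPlus l m μ).toOrderHom (Fin.last (l + 1)) = Fin.last (m + 1) :=
  dif_neg (lt_irrefl _)

lemma δ_last_comp_muPlus :
    SimplexCategory.δ (Fin.last (l + 1)) ≫ muPlus l m μ =
      μ ≫ SimplexCategory.δ (Fin.last (m + 1)) := by
  ext v : 3
  simp [δ_last_apply, muPlus_castSucc]

lemma ι_midToL_inl (i : Fin (m + 1)) (b : B) :
    Sigma.ι (fun _ : (Fin (m + 1) × B) ⊕ A => (Δ[0] : SSet)) (Sum.inl (i, b)) ≫
      midToL A B u l m μ =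
      stdVert m i ≫ Sigma.ι (fun _ : B => (Δ[m] : SSet)) b ≫
        pushout.inl (toLB A B u l m μ) (toLA1 A l) :=
  Sigma.ι_desc _ _

lemma ι_midToL_inr (a : A) :
    Sigma.ι (fun _ : (Fin (m + 1) × B) ⊕ A => (Δ[0] : SSet)) (Sum.inr a) ≫
      midToL A B u l m μ =
      stdVert (l + 1) (Fin.last (l + 1)) ≫ Sigma.ι (fun _ : A => (Δ[l + 1] : SSet)) a ≫
        pushout.inr (toLB A B u l m μ) (toLA1 A l) :=
  Sigma.ι_desc _ _

-- `LL` is not reducible, so `Category.assoc` (and hence `reassoc_of%`) cannot reassociate a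
-- composite passing through it; these forms are stated with the continuation built in.
lemma ι_midToL_inl_comp (i : Fin (m + 1)) (b : B) {Z : SSet} (h : LL A B u l m μ ⟶ Z) :
    Sigma.ι (fun _ : (Fin (m + 1) × B) ⊕ A => (Δ[0] : SSet)) (Sum.inl (i, b)) ≫
      midToL A B u l m μ ≫ h =
      stdVert m i ≫ Sigma.ι (fun _ : B => (Δ[m] : SSet)) b ≫
        pushout.inl (toLB A B u l m μ) (toLA1 A l) ≫ h := by
  rw [midToL, Sigma.ι_desc_assoc, Category.assoc]
  exact congrArg _ (Category.assoc _ _ _)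

lemma ι_midToL_inr_comp (a : A) {Z : SSet} (h : LL A B u l m μ ⟶ Z) :
    Sigma.ι (fun _ : (Fin (m + 1) × B) ⊕ A => (Δ[0] : SSet)) (Sum.inr a) ≫
      midToL A B u l m μ ≫ h =
      stdVert (l + 1) (Fin.last (l + 1)) ≫ Sigma.ι (fun _ : A => (Δ[l + 1] : SSet)) a ≫
        pushout.inr (toLB A B u l m μ) (toLA1 A l) ≫ h := by
  rw [midToL, Sigma.ι_desc_assoc, Category.assoc]
  exact congrArg _ (Category.assoc _ _ _)

noncomputable def llToStdSimplex : LL A B u l m μ ⟶ (Δ[m + 1] : SSet) :=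
  pushout.desc (Sigma.desc fun _ => SSet.stdSimplex.map (SimplexCategory.δ (Fin.last (m + 1))))
    (Sigma.desc fun _ => SSet.stdSimplex.map (muPlus l m μ)) (by
      ext a : 1
      rw [toLB, toLA1, Sigma.ι_desc_assoc, Sigma.ι_desc_assoc, Category.assoc, Category.assoc,
        Sigma.ι_desc, Sigma.ι_desc, ← SSet.stdSimplex.map_comp, ← SSet.stdSimplex.map_comp,
        δ_last_comp_muPlus])

lemma inl_llToStdSimplex :
    pushout.inl (toLB A B u l m μ) (toLA1 A l) ≫ llToStdSimplex A B u l m μ =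
      Limits.Sigma.desc fun _ => SSet.stdSimplex.map (SimplexCategory.δ (Fin.last (m + 1))) :=
  pushout.inl_desc _ _ _

lemma inr_llToStdSimplex :
    pushout.inr (toLB A B u l m μ) (toLA1 A l) ≫ llToStdSimplex A B u l m μ =
      Limits.Sigma.desc fun _ => SSet.stdSimplex.map (muPlus l m μ) :=
  pushout.inr_desc _ _ _

noncomputable def ccToStdSimplex : CC A B u l m μ ⟶ (Δ[m + 1] : SSet) :=
  pushout.desc (llToStdSimplex A B u l m μ) (Sigma.desc fun i => stdVert (m + 1) i) (by
    ext (⟨i, b⟩ | a) : 1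
    · rw [ι_midToL_inl_comp, midToR, Sigma.ι_desc_assoc, Sigma.ι_desc, inl_llToStdSimplex,
        Sigma.ι_desc, stdVert_comp, δ_last_apply]
    · rw [ι_midToL_inr_comp, midToR, Sigma.ι_desc_assoc, Sigma.ι_desc, inr_llToStdSimplex,
        Sigma.ι_desc, stdVert_comp, muPlus_last])

lemma ccToStdSimplex_app_vertC (i : Fin (m + 2)) :
    (ccToStdSimplex A B u l m μ).app _ (vertC A B u l m μ i) = vertStd (m + 1) i := by
  have h : Sigma.ι _ i ≫ pushout.inr _ _ ≫ ccToStdSimplex A B u l m μ =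
      stdVert (m + 1) i := by
    rw [ccToStdSimplex, pushout.inr_desc, Sigma.ι_desc]
  exact ConcreteCategory.congr_hom (congr_app h _) (vertStd 0 0)

lemma stdVert_castSucc_ι_inr (a : A) (v : Fin (l + 1)) :
    stdVert (l + 1) v.castSucc ≫ Sigma.ι (fun _ : A => (Δ[l + 1] : SSet)) a ≫
        pushout.inr (toLB A B u l m μ) (toLA1 A l) =
      stdVert m (μ.toOrderHom v) ≫ Sigma.ι (fun _ : B => (Δ[m] : SSet)) (u a) ≫
        pushout.inl (toLB A B u l m μ) (toLA1 A l) := by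
  have hδ : stdVert (l + 1) v.castSucc =
      stdVert l v ≫ SSet.stdSimplex.map (SimplexCategory.δ (Fin.last (l + 1))) := by
    rw [stdVert_comp, δ_last_apply]
  have hA : SSet.stdSimplex.map (SimplexCategory.δ (Fin.last (l + 1))) ≫
      Sigma.ι (fun _ : A => (Δ[l + 1] : SSet)) a =
        Sigma.ι (fun _ : A => (Δ[l] : SSet)) a ≫ toLA1 A l := by
    rw [toLA1, Sigma.ι_desc]
  have hB : Sigma.ι (fun _ : A => (Δ[l] : SSet)) a ≫ toLB A B u l m μ =
      SSet.stdSimplex.map μ ≫ Sigma.ι (fun _ : B => (Δ[m] : SSet)) (u a) :=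
    Sigma.ι_desc _ _
  rw [hδ, Category.assoc, reassoc_of% hA, ← pushout.condition, reassoc_of% hB, ← stdVert_comp]
  simp only [Category.assoc]

lemma midToL_app_surjective : Function.Surjective ((midToL A B u l m μ).app (op ⦋0⦌)) := by
  intro x
  rcases SSet.pushout_app_jointly_surjective _ _ x with ⟨y, rfl⟩ | ⟨y, rfl⟩
  · obtain ⟨b, t, rfl⟩ := SSet.sigma_ι_app_jointly_surjective _ y
    obtain ⟨k, rfl⟩ := vertStd_surjective _ t
    exact ⟨_, ConcreteCategory.congr_hom (congr_app (ι_midToL_inl A B u l m μ k b) _)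
      (vertStd 0 0)⟩
  · obtain ⟨a, t, rfl⟩ := SSet.sigma_ι_app_jointly_surjective _ y
    obtain ⟨k, rfl⟩ := vertStd_surjective _ t
    induction k using Fin.lastCases with
    | last => exact ⟨_, ConcreteCategory.congr_hom (congr_app (ι_midToL_inr A B u l m μ a) _)
      (vertStd 0 0)⟩
    | cast v =>
      have h := (ι_midToL_inl A B u l m μ (μ.toOrderHom v) (u a)).trans
        (stdVert_castSucc_ι_inr A B u l m μ a v).symm
      exact ⟨_, ConcreteCategory.congr_hom (congr_app h _) (vertStd 0 0)⟩

lemma vertC_injective : Function.Injective (vertC A B u l m μ) := fun i j h =>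
  vertStd_injective (m + 1) <| by
    rw [← ccToStdSimplex_app_vertC, ← ccToStdSimplex_app_vertC, h]

lemma vertC_surjective : Function.Surjective (vertC A B u l m μ) := by
  intro x
  obtain ⟨y, rfl⟩ := SSet.pushout_inr_app_surjective (midToR A B m)
    (midToL_app_surjective A B u l m μ) x
  obtain ⟨i, w, rfl⟩ := SSet.sigma_ι_app_jointly_surjective _ y
  obtain ⟨k, rfl⟩ := vertStd_surjective 0 w
  obtain rfl := Fin.fin_one_eq_zero k
  exact ⟨i, rfl⟩

theorem statement_1 :
    Function.Bijective (fun i : Fin (m + 2) => vertC A B u l m μ i) :=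
  ⟨vertC_injective A B u l m μ, vertC_surjective A B u l m μ⟩

end Cone

end Paper
end

section
/- Let m ≥ 0 and let C be a category whose set of objects is {0, 1, …, m}, such that Hom_C(i,j) = ∅ whenever j < i and Hom_C(i,i) = {id_i} for every i. Let D be a category, and let η: F ⟶ G and χ: P ⟶ Q be natural transformations between functors C^op → D. Assume that the component η_i: F(i) → G(i) is an isomorphism for every 0 < i ≤ m, and that η_0: F(0) → G(0) has the left lifting property with respect to χ_0: P(0) → Q(0) in D. Then η has the left lifting property with respect to χ as morphisms in the functor category Fun(C^op, D). (This is the unenriched lifting-theoretic content of the paper's lemma that a natural transformation between functors out of a directed enriched category which is an isomorphism in positive degrees and a (trivial) cofibration in degree 0 is a projective (trivial) cofibration.) -/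
open CategoryTheory Opposite

/-- Let `m ≥ 0` and let `C` be a category whose set of objects is
`{0, 1, …, m}`, such that `Hom_C(i,j) = ∅` whenever `j < i` and `Hom_C(i,i) = {id_i}` for
every `i`. Let `D` be a category, and let `η : F ⟶ G` and `χ : P ⟶ Q` be natural
transformations between functors `C^op ⥤ D`. Assume that the component `η_i` is an
isomorphism for every `0 < i ≤ m`, and that `η_0` has the left lifting property with
respect to `χ_0` in `D`. Then `η` has the left lifting property with respect to `χ` as
morphisms in the functor category `Fun(C^op, D)`. -/
theorem statement_9 {m : ℕ} [Category (Fin (m + 1))] {D : Type*} [Category D]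
    (hdir₁ : ∀ i j : Fin (m + 1), j < i → IsEmpty (i ⟶ j))
    (hdir₂ : ∀ (i : Fin (m + 1)) (f : i ⟶ i), f = 𝟙 i)
    {F G P Q : (Fin (m + 1))ᵒᵖ ⥤ D} (η : F ⟶ G) (χ : P ⟶ Q)
    (hiso : ∀ i : Fin (m + 1), 0 < i → IsIso (η.app (op i)))
    (hlift : HasLiftingProperty (η.app (op (0 : Fin (m + 1)))) (χ.app (op (0 : Fin (m + 1))))) :
    HasLiftingProperty η χ := by
  constructor
  intro f g sq
  have w : ∀ X, f.app X ≫ χ.app X = η.app X ≫ g.app X := by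
    intro X
    rw [← NatTrans.comp_app, sq.w, NatTrans.comp_app]
  have key : ∀ i : Fin (m + 1), ∃ l : G.obj (op i) ⟶ P.obj (op i),
      η.app (op i) ≫ l = f.app (op i) ∧ l ≫ χ.app (op i) = g.app (op i) := by
    intro i
    by_cases h : 0 < i
    · have := hiso i h
      refine ⟨inv (η.app (op i)) ≫ f.app (op i), by simp, ?_⟩
      rw [Category.assoc, w, IsIso.inv_hom_id_assoc]
    · have hi : i = 0 := Fin.le_zero_iff.mp (not_lt.mp h)
      subst hi
      have sq0 : CommSq (f.app (op (0 : Fin (m + 1)))) (η.app (op (0 : Fin (m + 1))))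
          (χ.app (op (0 : Fin (m + 1)))) (g.app (op (0 : Fin (m + 1)))) := ⟨w _⟩
      exact ⟨sq0.lift, sq0.fac_left, sq0.fac_right⟩
  choose l hl hl' using key
  constructor
  constructor
  refine ⟨⟨fun X => l X.unop, ?_⟩, ?_, ?_⟩
  · intro X Y k
    by_cases h : 0 < X.unop
    · have := hiso X.unop h
      have : Epi (η.app (op X.unop)) := inferInstance
      rw [← cancel_epi (η.app (op X.unop))]
      have hnat : η.app (op X.unop) ≫ G.map k = F.map k ≫ η.app (op Y.unop) := by
        exact (η.naturality k).symm
      calc η.app (op X.unop) ≫ G.map k ≫ l Y.unop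
          = (η.app (op X.unop) ≫ G.map k) ≫ l Y.unop := by rw [Category.assoc]
        _ = (F.map k ≫ η.app (op Y.unop)) ≫ l Y.unop := by rw [hnat]
        _ = F.map k ≫ f.app (op Y.unop) := by rw [Category.assoc, hl]
        _ = f.app (op X.unop) ≫ P.map k := f.naturality k
        _ = η.app (op X.unop) ≫ l X.unop ≫ P.map k := by rw [← Category.assoc, hl]
    · have hx : X.unop = 0 := by
        rcases Fin.eq_zero_or_eq_succ X.unop with h0 | ⟨j, hj⟩
        · exact h0
        · exact absurd (hj ▸ Fin.succ_pos j) h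
      have hy : Y.unop = 0 := by
        by_contra hy
        have : 0 < Y.unop := Fin.pos_iff_ne_zero.mpr hy
        have : IsEmpty (Y.unop ⟶ X.unop) := hx ▸ hdir₁ Y.unop 0 this
        exact this.elim k.unop
      obtain rfl : X = Y := by rw [← op_unop X, ← op_unop Y, hx, hy]
      have hk : k = 𝟙 X := by
        conv_lhs => rw [← k.op_unop, hdir₂ _ k.unop]
        rfl
      rw [hk]
      simp
  · ext X
    exact hl X.unop
  · ext X
    exact hl' X.unop
end

section
/- Let g: U ↪ T be a monomorphism of bi-pointed simplicial sets between necklaces (in particular, g preserves the first vertex α and the last vertex ω). Then the image under g of the last bead of U is contained in the last bead of T. -/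
/-!
A simplex in the last bead of `U` is a face of that bead, so it suffices to treat the bead itself.
Its image under `g` lies in some bead of `T` and contains `g ω = ω`; since the beads are
nondegenerate as soon as there are several, every bead but the last ends strictly before `ω`.
-/

open CategoryTheory Simplicial Opposite Limits

namespace Paper

/-- A simplex is degenerate if it is the image of a strictly lower-dimensional simplex
under a surjective simplicial operator. -/
def IsDegenerate (X : SSet) {n : ℕ} (x : X.obj (op (SimplexCategory.mk n))) : Prop :=
  ∃ (k : ℕ) (f : SimplexCategory.mk n ⟶ SimplexCategory.mk k)
    (y : X.obj (op (SimplexCategory.mk k))),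
      k < n ∧ Function.Surjective f.toOrderHom ∧ X.map f.op y = x

/-- The combinatorial data of a necklace `Δ[m₁] ∨ ⋯ ∨ Δ[mₜ]`. -/
structure Necklace where
  beads : List ℕ
  ne : beads ≠ []
  pos : 1 < beads.length → ∀ x ∈ beads, 0 < x

namespace Necklace

/-- The index of the last vertex of the necklace. -/
def total (N : Necklace) : ℕ := N.beads.sum

/-- The position of the `j`-th joint of the necklace. -/
def cum (N : Necklace) (j : ℕ) : ℕ := (N.beads.take j).sum

lemma cum_le_total (N : Necklace) (j : ℕ) : N.cum j ≤ N.total := by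
  have := List.sum_take_add_sum_drop N.beads j
  unfold cum total
  omega

lemma cum_succ_eq (N : Necklace) {j : ℕ} (hj : j < N.beads.length) :
    N.cum (j + 1) = N.cum j + N.beads.get ⟨j, hj⟩ :=
  List.sum_take_succ _ _ _

private lemma exists_interval : ∀ (l : List ℕ), l ≠ [] → ∀ k : ℕ, k ≤ l.sum →
    ∃ j, j < l.length ∧ (l.take j).sum ≤ k ∧ k ≤ (l.take (j + 1)).sum := by
  intro l
  induction l with
  | nil => intro h; exact absurd rfl h
  | cons a t ih =>
    intro _ k hk
    by_cases hka : k ≤ a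
    · exact ⟨0, by simp, by simp, by simpa using hka⟩
    · push_neg at hka
      rcases eq_or_ne t [] with rfl | ht
      · simp only [List.sum_cons, List.sum_nil, Nat.add_zero] at hk
        omega
      · simp only [List.sum_cons] at hk
        obtain ⟨j, hj, h1, h2⟩ := ih ht (k - a) (by omega)
        refine ⟨j + 1, by simp only [List.length_cons]; omega, ?_, ?_⟩
        · simp only [List.take_succ_cons, List.sum_cons]
          omega
        · simp only [List.take_succ_cons, List.sum_cons]
          omega

/-- The predicate: a simplex of `Δ[N.total]` lies in the `j`-th bead. -/
def InBead (N : Necklace) (j : ℕ) {x : SimplexCategory}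
    (σ : x ⟶ SimplexCategory.mk N.total) : Prop :=
  ∀ i, N.cum j ≤ (σ.toOrderHom i : ℕ) ∧ (σ.toOrderHom i : ℕ) ≤ N.cum (j + 1)

/-- The predicate defining the simplices of the necklace, as a subcomplex of
`Δ[N.total]`: those simplices contained in some bead. -/
def IsSimplex (N : Necklace) {x : SimplexCategory}
    (σ : x ⟶ SimplexCategory.mk N.total) : Prop :=
  ∃ j, j < N.beads.length ∧ N.InBead j σ

/-- The simplicial set `Δ[m₁] ∨ ⋯ ∨ Δ[mₜ]` associated to a necklace, realized as the
subcomplex of `Δ[N.total]` consisting of the simplices lying in one of the beads. -/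
def toSSet (N : Necklace) : SSet where
  obj X := { σ : X.unop ⟶ SimplexCategory.mk N.total // N.IsSimplex σ }
  map f := TypeCat.ofHom fun σ => ⟨f.unop ≫ σ.1, by
    obtain ⟨j, hj, hb⟩ := σ.2
    exact ⟨j, hj, fun i => hb _⟩⟩
  map_id X := by
    ext σ : 3
    exact Subtype.ext (Category.id_comp _)
  map_comp f g := by
    ext σ : 3
    exact Subtype.ext rfl

/-- The vertices of a necklace. -/
def vertex (N : Necklace) (k : Fin (N.total + 1)) :
    N.toSSet.obj (op (SimplexCategory.mk 0)) :=
  ⟨SimplexCategory.Hom.mk (OrderHom.const _ k), by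
    obtain ⟨j, hj, h1, h2⟩ := exists_interval N.beads N.ne k (Nat.lt_succ_iff.mp k.isLt)
    exact ⟨j, hj, fun _ => ⟨h1, h2⟩⟩⟩

/-- A simplex of a necklace lies in the last bead. -/
def InLastBead (N : Necklace) {x : SimplexCategoryᵒᵖ} (σ : N.toSSet.obj x) : Prop :=
  ∀ i, N.cum (N.beads.length - 1) ≤ (σ.1.toOrderHom i : ℕ)

/-- The `j`-th bead of a necklace, as a simplex of the necklace. -/
def beadSimplex (N : Necklace) (j : ℕ) (hj : j < N.beads.length) :
    N.toSSet.obj (op (SimplexCategory.mk (N.beads.get ⟨j, hj⟩))) :=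
  ⟨SimplexCategory.Hom.mk
    { toFun := fun i => ⟨N.cum j + i, by
        have h1 := N.cum_succ_eq hj
        have h2 := N.cum_le_total (j + 1)
        have h3 := i.isLt
        simp only [List.get_eq_getElem, SimplexCategory.len_mk] at h1 h3 ⊢
        omega⟩
      monotone' := fun i i' hii' => Nat.add_le_add_left hii' _ },
   ⟨j, hj, fun i => by
      refine ⟨Nat.le_add_right _ _, ?_⟩
      have h1 := N.cum_succ_eq hj
      have h3 := Nat.lt_succ_iff.mp i.isLt
      simp only [List.get_eq_getElem, SimplexCategory.len_mk] at h1 h3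
      show N.cum j + (i : ℕ) ≤ N.cum (j + 1)
      omega⟩⟩

variable (N : Necklace)

lemma pred_length_lt : N.beads.length - 1 < N.beads.length :=
  Nat.sub_one_lt (List.length_pos_iff.mpr N.ne).ne'

lemma cum_succ_lt_total {j : ℕ} (hj : j + 1 < N.beads.length) : N.cum (j + 1) < N.total := by
  have hpos : 0 < N.beads.get ⟨j + 1, hj⟩ := N.pos (by omega) _ (List.get_mem _ _)
  have := N.cum_succ_eq hj
  have := N.cum_le_total (j + 1 + 1)
  omega

lemma cum_length : N.cum N.beads.length = N.total :=
  congrArg List.sum List.take_length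

lemma cum_pred_length_add_last : N.cum (N.beads.length - 1) +
    N.beads.get ⟨N.beads.length - 1, N.pred_length_lt⟩ = N.total := by
  rw [← N.cum_succ_eq, Nat.sub_add_cancel (List.length_pos_iff.mpr N.ne), cum_length]

lemma inBead_pred_length_of_inLastBead {x : SimplexCategoryᵒᵖ} {σ : N.toSSet.obj x}
    (hσ : N.InLastBead σ) : N.InBead (N.beads.length - 1) σ.1 := by
  intro i
  refine ⟨hσ i, ?_⟩
  rw [Nat.sub_add_cancel (List.length_pos_iff.mpr N.ne), cum_length]
  exact Nat.lt_succ_iff.mp (σ.1.toOrderHom i).isLt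

lemma InLastBead.map {x y : SimplexCategoryᵒᵖ} {σ : N.toSSet.obj x} (hσ : N.InLastBead σ)
    (f : x ⟶ y) : N.InLastBead (N.toSSet.map f σ) :=
  fun _ => hσ _

lemma inLastBead_of_toOrderHom_eq_last {x : SimplexCategoryᵒᵖ} (σ : N.toSSet.obj x)
    (i : Fin (x.unop.len + 1)) (hi : σ.1.toOrderHom i = Fin.last _) : N.InLastBead σ := by
  obtain ⟨j, hj, hσ⟩ := σ.2
  have hj_last : j = N.beads.length - 1 := by
    by_contra hne
    have := N.cum_succ_lt_total (j := j) (by omega)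
    have := (hσ i).2
    simp only [hi, Fin.val_last, SimplexCategory.len_mk] at this
    omega
  exact fun i' => hj_last ▸ (hσ i').1

lemma exists_eq_map_beadSimplex {j : ℕ} (hj : j < N.beads.length) {x : SimplexCategoryᵒᵖ}
    (σ : N.toSSet.obj x) (hσ : N.InBead j σ.1) :
    ∃ f : x.unop ⟶ SimplexCategory.mk (N.beads.get ⟨j, hj⟩),
      σ = N.toSSet.map f.op (N.beadSimplex j hj) := by
  have hbead := N.cum_succ_eq hj
  refine ⟨SimplexCategory.Hom.mk
    { toFun := fun i => ⟨σ.1.toOrderHom i - N.cum j, by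
        have := (hσ i).2
        simp only [SimplexCategory.len_mk, List.get_eq_getElem] at hbead ⊢
        omega⟩
      monotone' := fun i i' hii' => Nat.sub_le_sub_right (σ.1.toOrderHom.monotone hii') _ },
    Subtype.ext (SimplexCategory.Hom.ext _ _ (OrderHom.ext _ _ (funext fun i => Fin.ext ?_)))⟩
  show (σ.1.toOrderHom i : ℕ) = N.cum j + (σ.1.toOrderHom i - N.cum j)
  have := (hσ i).1
  omega

lemma map_const_eq_vertex {x : SimplexCategoryᵒᵖ} (σ : N.toSSet.obj x)
    (i : Fin (x.unop.len + 1)) :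
    N.toSSet.map (SimplexCategory.const (SimplexCategory.mk 0) x.unop i).op σ =
      N.vertex (σ.1.toOrderHom i) :=
  rfl

end Necklace

section

variable {U T : Necklace} (g : U.toSSet ⟶ T.toSSet)

lemma toOrderHom_app {x : SimplexCategoryᵒᵖ} (σ : U.toSSet.obj x) (i : Fin (x.unop.len + 1)) :
    (g.app x σ).1.toOrderHom i =
      (g.app _ (U.vertex (σ.1.toOrderHom i))).1.toOrderHom 0 := by
  rw [← U.map_const_eq_vertex, NatTrans.naturality_apply]
  rfl

lemma inLastBead_app_beadSimplex
    (hω : g.app (op (SimplexCategory.mk 0)) (U.vertex (Fin.last _)) =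
      T.vertex (Fin.last _)) :
    T.InLastBead (g.app _ (U.beadSimplex _ U.pred_length_lt)) := by
  refine T.inLastBead_of_toOrderHom_eq_last _ (Fin.last _) ?_
  rw [toOrderHom_app]
  have hlast : (U.beadSimplex _ U.pred_length_lt).1.toOrderHom (Fin.last _) = Fin.last _ :=
    Fin.ext U.cum_pred_length_add_last
  rw [hlast, hω]
  rfl

end

theorem statement_10_general (U T : Necklace) (g : U.toSSet ⟶ T.toSSet)
    (hω : g.app (op (SimplexCategory.mk 0)) (U.vertex (Fin.last _)) =
      T.vertex (Fin.last _)) :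
    ∀ (x : SimplexCategoryᵒᵖ) (σ : U.toSSet.obj x),
      U.InLastBead σ → T.InLastBead (g.app x σ) := by
  intro x σ hσ
  obtain ⟨f, rfl⟩ :=
    U.exists_eq_map_beadSimplex U.pred_length_lt σ (U.inBead_pred_length_of_inLastBead hσ)
  rw [NatTrans.naturality_apply]
  exact (inLastBead_app_beadSimplex g hω).map _ f.op

/-- Let `g : U ↪ T` be a monomorphism of bi-pointed simplicial sets
between necklaces (in particular, `g` preserves the first vertex `α` and the last vertex
`ω`). Then the image under `g` of the last bead of `U` is contained in the last bead of
`T`. -/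
theorem statement_10 (U T : Necklace) (g : U.toSSet ⟶ T.toSSet) [Mono g]
    (hα : g.app (op (SimplexCategory.mk 0)) (U.vertex 0) = T.vertex 0)
    (hω : g.app (op (SimplexCategory.mk 0)) (U.vertex (Fin.last _)) =
      T.vertex (Fin.last _)) :
    ∀ (x : SimplexCategoryᵒᵖ) (σ : U.toSSet.obj x),
      U.InLastBead σ → T.InLastBead (g.app x σ) :=
  statement_10_general U T g hω

end Paper
end
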